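/- arXiv:1206.4990 — 8 statements merged into one kernel-verified Lean document; each statement's English description precedes it below -/
import Mathlib

section
/- Let X be a set, A = FreeAlgebra ℚ X, and let Lie(X) ⊆ A be the Lie subalgebra (under the commutator bracket [a,b] = ab − ba) generated by the letters of X, i.e. the free Lie algebra on X inside A. Let f : X → A be a map with f(y) lying in the ℚ-linear span of X for every y ∈ X, and let δ : A → A be the unique derivation of A extending f. Let D_δ : A → A be the ℚ-linear map defined on words by D_δ(y₁⋯yₙ) := [⋯[[δ(y₁), y₂], y₃]⋯, yₙ] for letters y_i ∈ X (and D_δ(1) = 0). Then: (1) D_δ maps A into Lie(X); and (2) for every l ∈ Lie(X), D_δ(l) = δ(l). -/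
/-!
Let `ε` be the augmentation of the free algebra. Checking on words,
`D_δ (a * x) = ⁅D_δ a, x⁆ + ε a • δ x` for every letter `x`. The elements `l` with `ε l = 0`
satisfying the same twisted Leibniz rule `D_δ (a * l) = ⁅D_δ a, l⁆ + ε a • δ l` for all `a` form a
Lie subalgebra, because `δ` is a derivation; it contains the letters, hence `Lie(X)`, and `a = 1`
gives `D_δ l = δ l`. That `D_δ` lands in `Lie(X)` is seen on words, since `δ` maps letters into
the span of the letters.
-/

attribute [local instance 100] LieRing.ofAssociativeRing

namespace FreeAlgebra

variable {R X : Type*} [CommRing R]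

theorem span_range_prod_map_ι :
    Submodule.span R (Set.range fun w : List X => (w.map (ι R)).prod) = ⊤ := by
  have h := congrArg Subalgebra.toSubmodule (adjoin_range_ι R X)
  rw [Algebra.adjoin_eq_span, ← FreeMonoid.mrange_lift, MonoidHom.coe_mrange] at h
  rw [← Algebra.top_toSubmodule, ← h]
  congr 1
  ext a
  simp only [Set.mem_range, FreeMonoid.lift_apply]
  exact FreeMonoid.toList.surjective.exists

@[simp]
theorem algebraMapInv_ι (x : X) : algebraMapInv (ι R x) = 0 := by
  simp [algebraMapInv]

end FreeAlgebra

section TwistedLeibniz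

variable {R A : Type*} [CommRing R] [Ring A] [Algebra R A]

theorem LieSubalgebra.foldl_commutator_mem (K : LieSubalgebra R A) {l : List A}
    (hl : ∀ b ∈ l, b ∈ K) {s : A} (hs : s ∈ K) :
    l.foldl (fun a b => a * b - b * a) s ∈ K := by
  induction l generalizing s with
  | nil => exact hs
  | cons b l ih =>
    simp only [List.forall_mem_cons] at hl
    rw [List.foldl_cons, ← Ring.lie_def]
    exact ih hl.2 (K.lie_mem hs hl.1)

theorem lie_apply_of_leibniz {δ : A →ₗ[R] A} (hδ : ∀ a b, δ (a * b) = δ a * b + a * δ b)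
    (x y : A) : δ ⁅x, y⁆ = ⁅δ x, y⁆ + ⁅x, δ y⁆ := by
  simp only [Ring.lie_def, map_sub, hδ]
  abel

def twistedLeibnizSubalgebra (ε : A →ₐ[R] R) (D δ : A →ₗ[R] A)
    (hδ : ∀ a b, δ (a * b) = δ a * b + a * δ b) : LieSubalgebra R A where
  carrier := {l | ε l = 0 ∧ ∀ a, D (a * l) = ⁅D a, l⁆ + ε a • δ l}
  zero_mem' := by simp
  add_mem' := by
    rintro x y ⟨hεx, hx⟩ ⟨hεy, hy⟩
    refine ⟨by simp [hεx, hεy], fun a => ?_⟩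
    simp only [mul_add, map_add, hx, hy, lie_add, smul_add]
    abel
  smul_mem' := by
    rintro r x ⟨hεx, hx⟩
    refine ⟨by simp [hεx], fun a => ?_⟩
    simp only [mul_smul_comm, map_smul, hx, smul_add, lie_smul, smul_comm r]
  lie_mem' := by
    rintro x y ⟨hεx, hx⟩ ⟨hεy, hy⟩
    refine ⟨by simp [Ring.lie_def, hεx, hεy], fun a => ?_⟩
    calc D (a * ⁅x, y⁆) = D (a * x * y) - D (a * y * x) := by
          rw [Ring.lie_def, mul_sub, map_sub, mul_assoc, mul_assoc]
      _ = ⁅⁅D a, x⁆ + ε a • δ x, y⁆ - ⁅⁅D a, y⁆ + ε a • δ y, x⁆ := by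
          simp [hx, hy, hεx, hεy]
      _ = ⁅D a, ⁅x, y⁆⁆ + ε a • δ ⁅x, y⁆ := by
          rw [lie_apply_of_leibniz hδ, add_lie, add_lie, smul_lie, smul_lie, smul_add, lie_lie,
            ← lie_skew x (δ y), smul_neg, ← lie_skew x ⁅D a, y⁆]
          abel

end TwistedLeibniz

section TwistedDynkin

open FreeAlgebra

variable {R X : Type*} [CommRing R]

def IsTwistedDynkin (D δ : FreeAlgebra R X →ₗ[R] FreeAlgebra R X) : Prop :=
  D 1 = 0 ∧ ∀ (z : X) (zs : List X),
    D ((z :: zs).map (ι R)).prod = (zs.map (ι R)).foldl (fun a b => a * b - b * a) (δ (ι R z))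

theorem isTwistedDynkin_of_ofFn {D δ : FreeAlgebra R X →ₗ[R] FreeAlgebra R X} (hD1 : D 1 = 0)
    (hDword : ∀ (n : ℕ) (y : Fin (n + 1) → X),
      D (List.ofFn fun i => ι R (y i)).prod =
        (((List.ofFn y).tail).map fun z => ι R z).foldl
          (fun a b => a * b - b * a) (δ (ι R (y 0)))) :
    IsTwistedDynkin D δ :=
  ⟨hD1, fun z zs => by
    simpa [List.ofFn_comp', List.ofFn_get] using hDword zs.length (z :: zs).get⟩

namespace IsTwistedDynkin

variable {D δ : FreeAlgebra R X →ₗ[R] FreeAlgebra R X}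

theorem apply_mem (hD : IsTwistedDynkin D δ) (K : LieSubalgebra R (FreeAlgebra R X))
    (hι : ∀ x, ι R x ∈ K) (hδι : ∀ x, δ (ι R x) ∈ K) (a : FreeAlgebra R X) : D a ∈ K := by
  suffices h : Submodule.span R (Set.range fun w : List X => (w.map (ι R)).prod) ≤
      K.toSubmodule.comap D by
    rw [span_range_prod_map_ι] at h
    exact h Submodule.mem_top
  rw [Submodule.span_le]
  rintro _ ⟨_ | ⟨z, zs⟩, rfl⟩
  · simp [hD.1]
  · rw [SetLike.mem_coe, Submodule.mem_comap, hD.2]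
    exact K.foldl_commutator_mem (by simpa using fun x _ => hι x) (hδι z)

theorem apply_mul_ι (hD : IsTwistedDynkin D δ) (x : X) (a : FreeAlgebra R X) :
    D (a * ι R x) = ⁅D a, ι R x⁆ + algebraMapInv a • δ (ι R x) := by
  have h := LinearMap.ext_on_range (span_range_prod_map_ι (R := R) (X := X))
    (f := D ∘ₗ LinearMap.mulRight R (ι R x))
    (g := (LinearMap.mulRight R (ι R x) - LinearMap.mulLeft R (ι R x)) ∘ₗ D +
      (algebraMapInv : FreeAlgebra R X →ₐ[R] R).toLinearMap.smulRight (δ (ι R x))) ?_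
  · simpa [Ring.lie_def] using LinearMap.congr_fun h a
  rintro (_ | ⟨z, zs⟩)
  · simpa [hD.1] using hD.2 x []
  · have hword :
        ((z :: zs).map (ι R)).prod * ι R x = ((z :: (zs ++ [x])).map (ι R)).prod := by
      simp [mul_assoc]
    rw [LinearMap.comp_apply, LinearMap.mulRight_apply, hword, hD.2, List.map_append,
      List.foldl_append, ← hD.2]
    simp

theorem apply_eq_of_mem_lieSpan (hD : IsTwistedDynkin D δ)
    (hδ : ∀ a b, δ (a * b) = δ a * b + a * δ b) {l : FreeAlgebra R X}
    (hl : l ∈ LieSubalgebra.lieSpan R _ (Set.range (ι R))) : D l = δ l := by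
  have hle : LieSubalgebra.lieSpan R _ (Set.range (ι R)) ≤
      twistedLeibnizSubalgebra algebraMapInv D δ hδ := by
    rw [LieSubalgebra.lieSpan_le]
    rintro _ ⟨x, rfl⟩
    exact ⟨algebraMapInv_ι x, fun a => hD.apply_mul_ι x a⟩
  simpa [hD.1] using (hle hl).2 1

end IsTwistedDynkin

end TwistedDynkin

/-- Let `A = FreeAlgebra ℚ X`, `Lie(X)` the Lie subalgebra (for the commutator
bracket) generated by the letters, `f : X → A` with values in the span of the letters,
`δ` the unique derivation of `A` extending `f`, and `D_δ` the linear map given on words by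
`D_δ(y₁⋯yₙ) = [⋯[[δ(y₁), y₂], y₃]⋯, yₙ]` (with `D_δ(1) = 0`).  Then `D_δ` maps `A` into
`Lie(X)` and `D_δ(l) = δ(l)` for every `l ∈ Lie(X)`. -/
theorem statement1 (X : Type)
    (LieX : LieSubalgebra ℚ (FreeAlgebra ℚ X))
    (hLieX : LieX = LieSubalgebra.lieSpan ℚ (FreeAlgebra ℚ X)
      (Set.range (FreeAlgebra.ι ℚ : X → FreeAlgebra ℚ X)))
    (f : X → FreeAlgebra ℚ X)
    (hf : ∀ x : X, f x ∈ Submodule.span ℚ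
      (Set.range (FreeAlgebra.ι ℚ : X → FreeAlgebra ℚ X)))
    (δ : FreeAlgebra ℚ X →ₗ[ℚ] FreeAlgebra ℚ X)
    (hδ : ∀ a b : FreeAlgebra ℚ X, δ (a * b) = δ a * b + a * δ b)
    (hδf : ∀ x : X, δ (FreeAlgebra.ι ℚ x) = f x)
    (Dδ : FreeAlgebra ℚ X →ₗ[ℚ] FreeAlgebra ℚ X)
    (hD1 : Dδ 1 = 0)
    (hDword : ∀ (n : ℕ) (y : Fin (n + 1) → X),
      Dδ (List.ofFn fun i => FreeAlgebra.ι ℚ (y i)).prod =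
        (((List.ofFn y).tail).map fun z => FreeAlgebra.ι ℚ z).foldl
          (fun a b => a * b - b * a) (δ (FreeAlgebra.ι ℚ (y 0)))) :
    (∀ a : FreeAlgebra ℚ X, Dδ a ∈ LieX) ∧ (∀ l ∈ LieX, Dδ l = δ l) := by
  subst hLieX
  have hD := isTwistedDynkin_of_ofFn hD1 hDword
  refine ⟨hD.apply_mem _ (fun x => ?_) (fun x => ?_),
    fun l hl => hD.apply_eq_of_mem_lieSpan hδ hl⟩
  · exact LieSubalgebra.subset_lieSpan ⟨x, rfl⟩
  · exact hδf x ▸ LieSubalgebra.submodule_span_le_lieSpan (hf x)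
end

section
/- (Dynkin–Specht–Wever) Let X be a set and A = FreeAlgebra ℚ X, graded by word length with degree-n component Tₙ(X) spanned by words of length n. Let Lie(X) ⊆ A be the Lie subalgebra generated by the letters (the free Lie algebra on X), and let D : A → A be the ℚ-linear map defined on words by D(y₁⋯yₙ) := [⋯[[y₁, y₂], y₃]⋯, yₙ] for letters y_i ∈ X. Then for every n ≥ 1 and every l ∈ Tₙ(X) ∩ Lie(X), one has D(l) = n·l. Consequently, the operator (1/n)·D restricted to Tₙ(X) is a projection of Tₙ(X) onto Tₙ(X) ∩ Lie(X). -/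
/-! The right adjoint action `m ↦ ⁅m, x⁆` of the letters extends to an antihomomorphism `ρ` from
the free algebra to its endomorphisms, with `ρ l = ⁅·, l⁆` for Lie elements `l`. On words the
defining formula of `D` reads `D (y * w) = ρ w y`, whence `D (a * b) = ρ b (D a) + ε a • D b` with
`ε` the augmentation. On Lie elements this gives `D ⁅a, b⁆ = ⁅D a, b⁆ + ⁅a, D b⁆`, the Leibniz rule
of the Euler derivation `N` (`N w = |w| • w` on words); since `D` and `N` both fix the letters,
`D = N` on the whole free Lie algebra, and `N = n` on `Tₙ`. -/

attribute [local instance 100] LieRing.ofAssociativeRing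

open FreeAlgebra MulOpposite

noncomputable section

theorem Submodule.lie_mem_pow_add {R A : Type*} [CommRing R] [Ring A] [Algebra R A]
    (M : Submodule R A) {p q : ℕ} {x y : A} (hx : x ∈ M ^ p) (hy : y ∈ M ^ q) :
    ⁅x, y⁆ ∈ M ^ (p + q) := by
  rw [Ring.lie_def]
  refine sub_mem (pow_add M p q ▸ Submodule.mul_mem_mul hx hy) ?_
  exact add_comm q p ▸ pow_add M q p ▸ Submodule.mul_mem_mul hy hx

namespace FreeAlgebra

variable {R X : Type*} [CommRing R]

theorem span_range_list_prod_map_ι :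
    Submodule.span R (Set.range fun l : List X => (l.map (ι R)).prod) = ⊤ := by
  rw [eq_top_iff, ← Algebra.top_toSubmodule, ← adjoin_range_ι, Algebra.adjoin_eq_span]
  refine Submodule.span_mono fun a ha => ?_
  have hle : Submonoid.closure (Set.range (ι R : X → FreeAlgebra R X)) ≤
      MonoidHom.mrange (FreeMonoid.lift (ι R)) :=
    Submonoid.closure_le.2 (Set.range_subset_iff.2 fun x => ⟨.of x, FreeMonoid.lift_eval_of _ x⟩)
  obtain ⟨w, rfl⟩ := hle ha
  exact ⟨w.toList, by simp [FreeMonoid.lift_apply]⟩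

def adRight : FreeAlgebra R X →ₐ[R] (Module.End R (FreeAlgebra R X))ᵐᵒᵖ :=
  lift R fun x => op (LinearMap.mulRight R (ι R x) - LinearMap.mulLeft R (ι R x))

@[simp]
theorem unop_adRight_ι_apply (x : X) (m : FreeAlgebra R X) :
    (adRight (ι R x)).unop m = ⁅m, ι R x⁆ := by
  simp [adRight, Ring.lie_def]

@[simp]
theorem unop_adRight_mul_apply (a b m : FreeAlgebra R X) :
    (adRight (a * b)).unop m = (adRight b).unop ((adRight a).unop m) := by
  simp

theorem unop_adRight_apply_of_mem_lieSpan {a : FreeAlgebra R X}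
    (ha : a ∈ LieSubalgebra.lieSpan R _ (Set.range (ι R))) (m : FreeAlgebra R X) :
    (adRight a).unop m = ⁅m, a⁆ := by
  induction ha using LieSubalgebra.lieSpan_induction generalizing m with
  | mem x hx => obtain ⟨x, rfl⟩ := hx; simp
  | zero => simp
  | add a b _ _ iha ihb => simp [iha, ihb]
  | smul r a _ iha => simp [iha]
  | lie a b _ _ iha ihb =>
    rw [Ring.lie_def, map_sub, unop_sub, LinearMap.sub_apply, unop_adRight_mul_apply,
      unop_adRight_mul_apply, iha, ihb, iha, ihb, ← Ring.lie_def, leibniz_lie,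
      ← lie_skew ⁅m, b⁆ a, sub_eq_add_neg, neg_neg]

theorem algebraMapInv_of_mem_lieSpan {a : FreeAlgebra R X}
    (ha : a ∈ LieSubalgebra.lieSpan R _ (Set.range (ι R))) : algebraMapInv a = 0 := by
  induction ha using LieSubalgebra.lieSpan_induction with
  | mem x hx => obtain ⟨x, rfl⟩ := hx; simp [algebraMapInv]
  | zero => simp
  | add a b _ _ iha ihb => simp [iha, ihb]
  | smul r a _ iha => simp [iha]
  | lie a b _ _ iha ihb => simp [Ring.lie_def, iha, ihb]

/-- Letters go to `(1 + ε) x`, so a word `w` goes to `(1 + ε) ^ |w| * w = w + |w| • ε w`: the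
`ε`-part is the Euler derivation. -/
def eulerHom : FreeAlgebra R X →ₐ[R] DualNumber (FreeAlgebra R X) :=
  lift R fun x => TrivSqZeroExt.inl (ι R x) + TrivSqZeroExt.inr (ι R x)

theorem fst_eulerHom (a : FreeAlgebra R X) : (eulerHom a).fst = a := by
  have : (TrivSqZeroExt.fstHom R _ _).comp eulerHom = AlgHom.id R (FreeAlgebra R X) := by
    ext x; simp [eulerHom]
  exact AlgHom.congr_fun this a

def euler : FreeAlgebra R X →ₗ[R] FreeAlgebra R X where
  toFun a := (eulerHom a).snd
  map_add' a b := by simp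
  map_smul' r a := by simp

@[simp]
theorem euler_ι (x : X) : euler (ι R x) = ι R x := by
  simp [euler, eulerHom]

theorem euler_mul (a b : FreeAlgebra R X) : euler (a * b) = a * euler b + euler a * b := by
  simp [euler, TrivSqZeroExt.snd_mul, fst_eulerHom]

theorem euler_lie (a b : FreeAlgebra R X) : euler ⁅a, b⁆ = ⁅euler a, b⁆ + ⁅a, euler b⁆ := by
  simp only [Ring.lie_def, map_sub, euler_mul]
  abel

theorem euler_eq_nsmul_of_mem_pow {n : ℕ} {a : FreeAlgebra R X}
    (ha : a ∈ Submodule.span R (Set.range (ι R)) ^ n) : euler a = n • a := by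
  induction n generalizing a with
  | zero =>
    obtain ⟨r, rfl⟩ := Submodule.mem_one.1 ha
    simp [Algebra.algebraMap_eq_smul_one, euler, eulerHom]
  | succ n ih =>
    rw [pow_succ] at ha
    refine Submodule.mul_induction_on ha (fun b hb c hc => ?_) fun x y hx hy => ?_
    · have hc' : euler c = c := by
        induction hc using Submodule.span_induction with
        | mem x hx => obtain ⟨x, rfl⟩ := hx; exact euler_ι x
        | zero => simp
        | add x y _ _ hx hy => simp [hx, hy]
        | smul r x _ hx => simp [hx]
      rw [euler_mul, ih hb, hc', smul_mul_assoc, succ_nsmul]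
      abel
    · simp [hx, hy]

theorem span_list_ofFn_prod_eq_pow (n : ℕ) :
    Submodule.span R {w : FreeAlgebra R X | ∃ y : Fin n → X,
      w = (List.ofFn fun i => ι R (y i)).prod} = Submodule.span R (Set.range (ι R)) ^ n := by
  rw [Submodule.span_pow]
  congr 1
  ext w
  simp only [Set.mem_ofPred_eq, Set.mem_pow]
  constructor
  · rintro ⟨y, rfl⟩
    exact ⟨fun i => ⟨ι R (y i), y i, rfl⟩, rfl⟩
  · rintro ⟨f, rfl⟩
    exact ⟨fun i => (f i).2.choose, by simp only [(f _).2.choose_spec]⟩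

theorem foldl_commutator_eq_unop_adRight (t : List X) (a : FreeAlgebra R X) :
    (t.map (ι R)).foldl (fun a b => a * b - b * a) a = (adRight (t.map (ι R)).prod).unop a := by
  induction t generalizing a with
  | nil => simp
  | cons z t ih => simp [ih, Ring.lie_def]

theorem unop_adRight_mem_pow_inf_lieSpan {n k : ℕ} {c b : FreeAlgebra R X}
    (hc : c ∈ Submodule.span R (Set.range (ι R)) ^ n)
    (hb : b ∈ Submodule.span R (Set.range (ι R)) ^ k ⊓
      (LieSubalgebra.lieSpan R _ (Set.range (ι R))).toSubmodule) :
    (adRight c).unop b ∈ Submodule.span R (Set.range (ι R)) ^ (k + n) ⊓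
      (LieSubalgebra.lieSpan R _ (Set.range (ι R))).toSubmodule := by
  induction n generalizing c with
  | zero =>
    obtain ⟨r, rfl⟩ := Submodule.mem_one.1 hc
    simpa [Algebra.algebraMap_eq_smul_one] using Submodule.smul_mem _ r hb
  | succ n ih =>
    rw [pow_succ] at hc
    refine Submodule.mul_induction_on hc (fun c hc m hm => ?_) fun x y hx hy => ?_
    · have hm1 : m ∈ Submodule.span R (Set.range (ι R)) ^ 1 := by rwa [pow_one]
      have hmL := LieSubalgebra.submodule_span_le_lieSpan hm
      obtain ⟨hcb, hcbL⟩ := ih hc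
      rw [unop_adRight_mul_apply, unop_adRight_apply_of_mem_lieSpan hmL, ← add_assoc]
      exact ⟨Submodule.lie_mem_pow_add _ hcb hm1, LieSubalgebra.lie_mem _ hcbL hmL⟩
    · rw [map_add, unop_add, LinearMap.add_apply]
      exact add_mem hx hy

section Dynkin

variable (D : FreeAlgebra R X →ₗ[R] FreeAlgebra R X) (hD1 : D 1 = 0)
  (hD : ∀ (y : X) (t : List X),
    D (ι R y * (t.map (ι R)).prod) = (adRight (t.map (ι R)).prod).unop (ι R y))
include hD1 hD

theorem dynkin_mul (a b : FreeAlgebra R X) :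
    D (a * b) = (adRight b).unop (D a) + algebraMapInv a • D b := by
  have hwords : ∀ u v : List X,
      D ((u.map (ι R)).prod * (v.map (ι R)).prod) =
        (adRight (v.map (ι R)).prod).unop (D (u.map (ι R)).prod) +
          algebraMapInv (u.map (ι R)).prod • D (v.map (ι R)).prod := by
    rintro (_ | ⟨y, t⟩) v
    · simp [hD1]
    · rw [List.map_cons, List.prod_cons, mul_assoc, ← List.prod_append, ← List.map_append, hD,
        hD, List.map_append, List.prod_append, unop_adRight_mul_apply]
      simp [algebraMapInv]
  have ha : a ∈ Submodule.span R (Set.range fun l : List X => (l.map (ι R)).prod) := by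
    simp [span_range_list_prod_map_ι]
  have hb : b ∈ Submodule.span R (Set.range fun l : List X => (l.map (ι R)).prod) := by
    simp [span_range_list_prod_map_ι]
  induction ha using Submodule.span_induction with
  | mem a ha =>
    obtain ⟨u, rfl⟩ := ha
    induction hb using Submodule.span_induction with
    | mem b hb => obtain ⟨v, rfl⟩ := hb; exact hwords u v
    | zero => simp
    | add b c _ _ hb hc => simp [mul_add, hb, hc]; abel
    | smul r b _ hb => simp [hb, smul_comm r]
  | zero => simp
  | add a c _ _ ha hc => simp [add_mul, ha, hc, add_smul]; abel
  | smul r a _ ha => simp [ha, mul_smul]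

theorem dynkin_eq_euler_of_mem_lieSpan {a : FreeAlgebra R X}
    (ha : a ∈ LieSubalgebra.lieSpan R _ (Set.range (ι R))) : D a = euler a := by
  induction ha using LieSubalgebra.lieSpan_induction with
  | mem x hx =>
    obtain ⟨x, rfl⟩ := hx
    simpa using hD x []
  | zero => simp
  | add a b _ _ iha ihb => simp [iha, ihb]
  | smul r a _ iha => simp [iha]
  | lie a b ha hb iha ihb =>
    rw [Ring.lie_def, map_sub, dynkin_mul D hD1 hD, dynkin_mul D hD1 hD,
      algebraMapInv_of_mem_lieSpan ha, algebraMapInv_of_mem_lieSpan hb,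
      unop_adRight_apply_of_mem_lieSpan ha, unop_adRight_apply_of_mem_lieSpan hb, iha, ihb,
      ← Ring.lie_def, euler_lie, ← lie_skew a (euler b), zero_smul, zero_smul, add_zero,
      add_zero, sub_eq_add_neg]

theorem dynkin_mem_pow_inf_lieSpan {n : ℕ} {a : FreeAlgebra R X}
    (ha : a ∈ Submodule.span R (Set.range (ι R)) ^ n) :
    D a ∈ Submodule.span R (Set.range (ι R)) ^ n ⊓
      (LieSubalgebra.lieSpan R _ (Set.range (ι R))).toSubmodule := by
  cases n with
  | zero =>
    obtain ⟨r, rfl⟩ := Submodule.mem_one.1 ha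
    simp [Algebra.algebraMap_eq_smul_one, hD1]
  | succ n =>
    rw [pow_succ'] at ha
    refine Submodule.mul_induction_on ha (fun b hb c hc => ?_) fun x y hx hy => ?_
    · have hb1 : b ∈ Submodule.span R (Set.range (ι R)) ^ 1 := by rwa [pow_one]
      have hbL := LieSubalgebra.submodule_span_le_lieSpan hb
      rw [dynkin_mul D hD1 hD, algebraMapInv_of_mem_lieSpan hbL, zero_smul, add_zero,
        dynkin_eq_euler_of_mem_lieSpan D hD1 hD hbL, euler_eq_nsmul_of_mem_pow hb1, one_smul,
        add_comm n 1]
      exact unop_adRight_mem_pow_inf_lieSpan hc ⟨hb1, hbL⟩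
    · rw [map_add]
      exact add_mem hx hy

end Dynkin

end FreeAlgebra

end

theorem statement2_general (X : Type)
    (LieX : LieSubalgebra ℚ (FreeAlgebra ℚ X))
    (hLieX : LieX = LieSubalgebra.lieSpan ℚ (FreeAlgebra ℚ X)
      (Set.range (FreeAlgebra.ι ℚ : X → FreeAlgebra ℚ X)))
    (T : ℕ → Submodule ℚ (FreeAlgebra ℚ X))
    (hT : ∀ n : ℕ, T n = Submodule.span ℚ
      { w : FreeAlgebra ℚ X | ∃ y : Fin n → X,
          w = (List.ofFn fun i => FreeAlgebra.ι ℚ (y i)).prod })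
    (D : FreeAlgebra ℚ X →ₗ[ℚ] FreeAlgebra ℚ X)
    (hD1 : D 1 = 0)
    (hDword : ∀ (n : ℕ) (y : Fin (n + 1) → X),
      D (List.ofFn fun i => FreeAlgebra.ι ℚ (y i)).prod =
        (((List.ofFn y).tail).map fun z => FreeAlgebra.ι ℚ z).foldl
          (fun a b => a * b - b * a) (FreeAlgebra.ι ℚ (y 0)))
    (n : ℕ) :
    (∀ l ∈ T n ⊓ LieX.toSubmodule, D l = (n : ℚ) • l) ∧
    (∀ a ∈ T n, ((n : ℚ)⁻¹ • D a) ∈ T n ⊓ LieX.toSubmodule) := by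
  have hD : ∀ (y : X) (t : List X),
      D (ι ℚ y * (t.map (ι ℚ)).prod) = (adRight (t.map (ι ℚ)).prod).unop (ι ℚ y) := by
    intro y t
    simpa [List.map_ofFn, ← foldl_commutator_eq_unop_adRight] using hDword t.length (y :: t).get
  subst hLieX
  rw [hT, span_list_ofFn_prod_eq_pow]
  refine ⟨fun l hl => ?_, fun a ha => Submodule.smul_mem _ _ ?_⟩
  · rw [dynkin_eq_euler_of_mem_lieSpan D hD1 hD hl.2, euler_eq_nsmul_of_mem_pow hl.1,
      Nat.cast_smul_eq_nsmul]
  · exact dynkin_mem_pow_inf_lieSpan D hD1 hD ha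

/-- Dynkin–Specht–Wever: In `A = FreeAlgebra ℚ X` graded by word length
(`Tₙ(X)` the span of the words of length `n`), with `Lie(X)` the Lie subalgebra generated by
the letters and `D` the linear map given on words by `D(y₁⋯yₙ) = [⋯[[y₁,y₂],y₃]⋯,yₙ]`
(`D(1) = 0`), one has `D(l) = n·l` for every `l ∈ Tₙ(X) ∩ Lie(X)` (`n ≥ 1`); moreover `D`
maps `Tₙ(X)` into `Tₙ(X) ∩ Lie(X)`, so that `(1/n)·D` restricted to `Tₙ(X)` is a projection
of `Tₙ(X)` onto `Tₙ(X) ∩ Lie(X)`. -/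
theorem statement2 (X : Type)
    (LieX : LieSubalgebra ℚ (FreeAlgebra ℚ X))
    (hLieX : LieX = LieSubalgebra.lieSpan ℚ (FreeAlgebra ℚ X)
      (Set.range (FreeAlgebra.ι ℚ : X → FreeAlgebra ℚ X)))
    (T : ℕ → Submodule ℚ (FreeAlgebra ℚ X))
    (hT : ∀ n : ℕ, T n = Submodule.span ℚ
      { w : FreeAlgebra ℚ X | ∃ y : Fin n → X,
          w = (List.ofFn fun i => FreeAlgebra.ι ℚ (y i)).prod })
    (D : FreeAlgebra ℚ X →ₗ[ℚ] FreeAlgebra ℚ X)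
    (hD1 : D 1 = 0)
    (hDword : ∀ (n : ℕ) (y : Fin (n + 1) → X),
      D (List.ofFn fun i => FreeAlgebra.ι ℚ (y i)).prod =
        (((List.ofFn y).tail).map fun z => FreeAlgebra.ι ℚ z).foldl
          (fun a b => a * b - b * a) (FreeAlgebra.ι ℚ (y 0)))
    (n : ℕ) (hn : 1 ≤ n) :
    (∀ l ∈ T n ⊓ LieX.toSubmodule, D l = (n : ℚ) • l) ∧
    (∀ a ∈ T n, ((n : ℚ)⁻¹ • D a) ∈ T n ⊓ LieX.toSubmodule) :=
  statement2_general X LieX hLieX T hT D hD1 hDword n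
end

section
/- Let X be a set with a distinguished element x ∈ X, let A = FreeAlgebra ℚ X, and let δ_x : A → A be the unique derivation of A with δ_x(x) = x and δ_x(y) = 0 for every letter y ≠ x. Let Tₙˣ(X) ⊆ A denote the ℚ-linear span of words in which the letter x appears exactly n times, and let Lie(X) ⊆ A be the Lie subalgebra generated by the letters. Define D_x : A → A on words by D_x(y₁⋯yₘ) := [⋯[[δ_x(y₁), y₂], y₃]⋯, yₘ]. Then for every n ≥ 1 and every l ∈ Tₙˣ(X) ∩ Lie(X), one has D_x(l) = n·l. Consequently (1/n)·D_x restricted to Tₙˣ(X) is a projection of Tₙˣ(X) onto Tₙˣ(X) ∩ Lie(X). -/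
attribute [local instance] LieRing.ofAssociativeRing

/-!
If `w` is a nonempty word and `y` a letter, then `D_x(w y) = [D_x w, y]`. By linearity and the
Jacobi identity this extends to `D_x(w p) = [D_x w, p]` for all `w` in the augmentation ideal and
all Lie polynomials `p`. Hence `D_x[p, q] = [D_x p, q] - [D_x q, p]` on Lie polynomials, the same
rule the derivation `δ_x` obeys; as `D_x` and `δ_x` agree on letters, they agree on `Lie(X)`, and
`δ_x` is multiplication by `n` on `Tₙˣ(X)`. Finally, `D_x` sends a word to an iterated bracket
of letters containing `x` equally often, so `D_x(Tₙˣ(X)) ⊆ Tₙˣ(X) ∩ Lie(X)`.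
-/

namespace FreeAlgebra

variable (R : Type*) [CommRing R] {X : Type*}

def word (l : List X) : FreeAlgebra R X := (l.map (ι R)).prod

@[simp] theorem word_nil : word R ([] : List X) = 1 := rfl

@[simp] theorem word_cons (a : X) (l : List X) : word R (a :: l) = ι R a * word R l := by
  simp [word]

@[simp] theorem word_append (l l' : List X) : word R (l ++ l') = word R l * word R l' := by
  simp [word]

theorem word_singleton (a : X) : word R [a] = ι R a := by simp

section WordsWithCount

variable [DecidableEq X]

def wordsWithCount (x : X) (k : ℕ) : Submodule R (FreeAlgebra R X) :=
  Submodule.span R {w | ∃ l : List X, w = word R l ∧ l.count x = k}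

variable {R}

theorem word_mem_wordsWithCount (x : X) (l : List X) :
    word R l ∈ wordsWithCount R x (l.count x) :=
  Submodule.subset_span ⟨l, rfl, rfl⟩

theorem wordsWithCount_mul_le (x : X) (k j : ℕ) :
    wordsWithCount R x k * wordsWithCount R x j ≤ wordsWithCount R x (k + j) := by
  rw [wordsWithCount, wordsWithCount, Submodule.span_mul_span]
  refine Submodule.span_mono ?_
  rintro _ ⟨_, ⟨l, rfl, rfl⟩, _, ⟨l', rfl, rfl⟩, rfl⟩
  exact ⟨l ++ l', (word_append R l l').symm, List.count_append ..⟩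

theorem lie_mem_wordsWithCount {x : X} {k j : ℕ} {u v : FreeAlgebra R X}
    (hu : u ∈ wordsWithCount R x k) (hv : v ∈ wordsWithCount R x j) :
    ⁅u, v⁆ ∈ wordsWithCount R x (k + j) := by
  rw [Ring.lie_def]
  refine sub_mem (wordsWithCount_mul_le x k j (Submodule.mul_mem_mul hu hv)) ?_
  rw [add_comm]
  exact wordsWithCount_mul_le x j k (Submodule.mul_mem_mul hv hu)

end WordsWithCount

section Derivation

variable {R} {δ : FreeAlgebra R X →ₗ[R] FreeAlgebra R X}

theorem map_one_eq_zero_of_leibniz (hδ : ∀ a b, δ (a * b) = δ a * b + a * δ b) : δ 1 = 0 := by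
  simpa using hδ 1 1

variable [DecidableEq X]

theorem map_word_of_leibniz (hδ : ∀ a b, δ (a * b) = δ a * b + a * δ b) {x : X}
    (hδx : δ (ι R x) = ι R x) (hδy : ∀ y, y ≠ x → δ (ι R y) = 0) (l : List X) :
    δ (word R l) = (l.count x : R) • word R l := by
  induction l with
  | nil => simp [map_one_eq_zero_of_leibniz hδ]
  | cons a l ih =>
    rw [word_cons, hδ, ih, List.count_cons]
    by_cases h : a = x
    · subst h
      simp only [hδx, beq_self_eq_true, if_true, Nat.cast_add, Nat.cast_one, mul_smul_comm]
      module
    · simp [hδy a h, h]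

theorem map_eq_smul_of_mem_wordsWithCount (hδ : ∀ a b, δ (a * b) = δ a * b + a * δ b)
    {x : X} (hδx : δ (ι R x) = ι R x) (hδy : ∀ y, y ≠ x → δ (ι R y) = 0) {k : ℕ}
    {a : FreeAlgebra R X} (ha : a ∈ wordsWithCount R x k) : δ a = (k : R) • a := by
  induction ha using Submodule.span_induction with
  | mem w hw =>
    obtain ⟨l, rfl, rfl⟩ := hw
    exact map_word_of_leibniz hδ hδx hδy l
  | zero => simp
  | add u v _ _ hu hv => rw [map_add, hu, hv, smul_add]
  | smul c u _ hu => rw [map_smul, hu, smul_comm]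

end Derivation

-- The augmentation ideal of `FreeAlgebra R X`.
variable (X) in
def nonemptyWordSpan : Submodule R (FreeAlgebra R X) :=
  Submodule.span R {w | ∃ a t, w = word R (a :: t)}

variable {R}

theorem word_cons_mem_nonemptyWordSpan (a : X) (t : List X) :
    word R (a :: t) ∈ nonemptyWordSpan R X :=
  Submodule.subset_span ⟨a, t, rfl⟩

theorem mul_mem_nonemptyWordSpan {w : FreeAlgebra R X} (hw : w ∈ nonemptyWordSpan R X)
    (p : FreeAlgebra R X) : w * p ∈ nonemptyWordSpan R X := by
  induction p using FreeAlgebra.induction generalizing w with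
  | grade0 r =>
    rw [← Algebra.commutes, ← Algebra.smul_def]
    exact Submodule.smul_mem _ r hw
  | grade1 y =>
    induction hw using Submodule.span_induction with
    | mem w hw =>
      obtain ⟨a, t, rfl⟩ := hw
      simpa [mul_assoc] using word_cons_mem_nonemptyWordSpan (R := R) a (t ++ [y])
    | zero => simp
    | add u v _ _ hu hv => rw [add_mul]; exact add_mem hu hv
    | smul c u _ hu => rw [smul_mul_assoc]; exact Submodule.smul_mem _ c hu
  | mul p q hp hq => rw [← mul_assoc]; exact hq (hp hw)
  | add p q hp hq => rw [mul_add]; exact add_mem (hp hw) (hq hw)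

theorem mem_nonemptyWordSpan_of_mem_lieSpan {p : FreeAlgebra R X}
    (hp : p ∈ LieSubalgebra.lieSpan R _ (Set.range (ι R))) : p ∈ nonemptyWordSpan R X := by
  induction hp using LieSubalgebra.lieSpan_induction with
  | mem _ h =>
    obtain ⟨y, rfl⟩ := h
    simpa using word_cons_mem_nonemptyWordSpan (R := R) y []
  | zero => exact zero_mem _
  | add _ _ _ _ hp hq => exact add_mem hp hq
  | smul c _ _ hp => exact Submodule.smul_mem _ c hp
  | lie p q _ _ hp hq =>
    rw [Ring.lie_def]
    exact sub_mem (mul_mem_nonemptyWordSpan hp q) (mul_mem_nonemptyWordSpan hq p)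

section DynkinOperator

variable {D δ : FreeAlgebra R X →ₗ[R] FreeAlgebra R X}

theorem map_mul_eq_lie_of_mem_lieSpan
    (hD : ∀ a t y, D (word R (a :: t) * ι R y) = ⁅D (word R (a :: t)), ι R y⁆)
    {w p : FreeAlgebra R X} (hw : w ∈ nonemptyWordSpan R X)
    (hp : p ∈ LieSubalgebra.lieSpan R _ (Set.range (ι R))) : D (w * p) = ⁅D w, p⁆ := by
  induction hp using LieSubalgebra.lieSpan_induction generalizing w with
  | mem _ h =>
    obtain ⟨y, rfl⟩ := h
    induction hw using Submodule.span_induction with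
    | mem w hw => obtain ⟨a, t, rfl⟩ := hw; exact hD a t y
    | zero => simp
    | add u v _ _ hu hv => rw [add_mul, map_add, map_add, hu, hv, add_lie]
    | smul c u _ hu => rw [smul_mul_assoc, map_smul, map_smul, hu, smul_lie]
  | zero => simp
  | add p q _ _ hp hq => rw [mul_add, map_add, hp hw, hq hw, lie_add]
  | smul c p _ hp => rw [mul_smul_comm, map_smul, hp hw, lie_smul]
  | lie p q _ _ hp hq =>
    have hwp := mul_mem_nonemptyWordSpan hw p
    have hwq := mul_mem_nonemptyWordSpan hw q
    calc D (w * ⁅p, q⁆) = D (w * p * q) - D (w * q * p) := by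
          rw [Ring.lie_def, mul_sub, map_sub, mul_assoc, mul_assoc]
      _ = ⁅⁅D w, p⁆, q⁆ - ⁅⁅D w, q⁆, p⁆ := by rw [hq hwp, hp hwq, hp hw, hq hw]
      _ = ⁅D w, ⁅p, q⁆⁆ := by rw [leibniz_lie, sub_eq_add_neg, ← lie_skew p ⁅D w, q⁆]

theorem map_eq_of_mem_lieSpan (hδ : ∀ a b, δ (a * b) = δ a * b + a * δ b)
    (hDι : ∀ y, D (ι R y) = δ (ι R y))
    (hD : ∀ a t y, D (word R (a :: t) * ι R y) = ⁅D (word R (a :: t)), ι R y⁆)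
    {p : FreeAlgebra R X} (hp : p ∈ LieSubalgebra.lieSpan R _ (Set.range (ι R))) :
    D p = δ p := by
  induction hp using LieSubalgebra.lieSpan_induction with
  | mem _ h => obtain ⟨y, rfl⟩ := h; exact hDι y
  | zero => simp
  | add p q _ _ hp hq => rw [map_add, map_add, hp, hq]
  | smul c p _ hp => rw [map_smul, map_smul, hp]
  | lie p q hp' hq' hp hq =>
    rw [Ring.lie_def, map_sub, map_sub,
      map_mul_eq_lie_of_mem_lieSpan hD (mem_nonemptyWordSpan_of_mem_lieSpan hp') hq',
      map_mul_eq_lie_of_mem_lieSpan hD (mem_nonemptyWordSpan_of_mem_lieSpan hq') hp',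
      hp, hq, hδ, hδ, Ring.lie_def, Ring.lie_def]
    abel

variable [DecidableEq X]

theorem map_word_cons_mem (hδ : ∀ a b, δ (a * b) = δ a * b + a * δ b) {x : X}
    (hδx : δ (ι R x) = ι R x) (hδy : ∀ y, y ≠ x → δ (ι R y) = 0)
    (hDι : ∀ y, D (ι R y) = δ (ι R y))
    (hD : ∀ a t y, D (word R (a :: t) * ι R y) = ⁅D (word R (a :: t)), ι R y⁆)
    (a : X) (t : List X) :
    D (word R (a :: t)) ∈ wordsWithCount R x ((a :: t).count x) ⊓
      (LieSubalgebra.lieSpan R _ (Set.range (ι R))).toSubmodule := by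
  induction t using List.reverseRecOn with
  | nil =>
    rw [word_singleton, hDι, ← word_singleton R a, map_word_of_leibniz hδ hδx hδy]
    refine ⟨Submodule.smul_mem _ _ (word_mem_wordsWithCount x [a]), ?_⟩
    rw [word_singleton]
    exact Submodule.smul_mem _ _ (LieSubalgebra.subset_lieSpan ⟨a, rfl⟩)
  | append_singleton t y ih =>
    rw [← List.cons_append, word_append, word_singleton, hD, List.count_append]
    exact ⟨lie_mem_wordsWithCount ih.1 (by simpa using word_mem_wordsWithCount (R := R) x [y]),
      LieSubalgebra.lie_mem _ ih.2 (LieSubalgebra.subset_lieSpan ⟨y, rfl⟩)⟩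

theorem map_mem_of_mem_wordsWithCount (hδ : ∀ a b, δ (a * b) = δ a * b + a * δ b) {x : X}
    (hδx : δ (ι R x) = ι R x) (hδy : ∀ y, y ≠ x → δ (ι R y) = 0)
    (hD1 : D 1 = 0) (hDι : ∀ y, D (ι R y) = δ (ι R y))
    (hD : ∀ a t y, D (word R (a :: t) * ι R y) = ⁅D (word R (a :: t)), ι R y⁆)
    {k : ℕ} {p : FreeAlgebra R X} (hp : p ∈ wordsWithCount R x k) :
    D p ∈ wordsWithCount R x k ⊓
      (LieSubalgebra.lieSpan R _ (Set.range (ι R))).toSubmodule := by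
  induction hp using Submodule.span_induction with
  | mem w hw =>
    obtain ⟨l, rfl, rfl⟩ := hw
    cases l with
    | nil => rw [word_nil, hD1]; exact zero_mem _
    | cons a t => exact map_word_cons_mem hδ hδx hδy hDι hD a t
  | zero => simp
  | add u v _ _ hu hv => rw [map_add]; exact add_mem hu hv
  | smul c u _ hu => rw [map_smul]; exact Submodule.smul_mem _ c hu

end DynkinOperator

theorem prod_ofFn_ι {m : ℕ} (y : Fin m → X) :
    (List.ofFn fun i => ι R (y i)).prod = word R (List.ofFn y) := by
  rw [word, List.map_ofFn]
  rfl

theorem span_prod_ofFn_eq_wordsWithCount [DecidableEq X] (x : X) (k : ℕ) :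
    Submodule.span R {w : FreeAlgebra R X | ∃ (m : ℕ) (y : Fin m → X),
      w = (List.ofFn fun i => ι R (y i)).prod ∧ (List.ofFn y).count x = k} =
      wordsWithCount R x k := by
  congr 1
  ext w
  simp only [prod_ofFn_ι, Set.mem_ofPred_eq]
  constructor
  · rintro ⟨m, y, rfl, hy⟩
    exact ⟨_, rfl, hy⟩
  · rintro ⟨l, rfl, hl⟩
    exact ⟨l.length, l.get, by rw [List.ofFn_get], by rwa [List.ofFn_get]⟩

theorem map_word_cons_of_ofFn {D δ : FreeAlgebra R X →ₗ[R] FreeAlgebra R X}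
    (hD : ∀ (m : ℕ) (y : Fin (m + 1) → X),
      D (List.ofFn fun i => ι R (y i)).prod =
        (((List.ofFn y).tail).map fun z => ι R z).foldl
          (fun a b => a * b - b * a) (δ (ι R (y 0))))
    (a : X) (t : List X) :
    D (word R (a :: t)) = (t.map (ι R)).foldl (fun u v => u * v - v * u) (δ (ι R a)) := by
  have h := hD t.length (Fin.cons a t.get)
  rw [prod_ofFn_ι] at h
  simpa [List.ofFn_succ] using h

end FreeAlgebra

open FreeAlgebra in
theorem statement3_general (X : Type) [DecidableEq X] (x : X)
    (LieX : LieSubalgebra ℚ (FreeAlgebra ℚ X))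
    (hLieX : LieX = LieSubalgebra.lieSpan ℚ (FreeAlgebra ℚ X)
      (Set.range (FreeAlgebra.ι ℚ : X → FreeAlgebra ℚ X)))
    (δx : FreeAlgebra ℚ X →ₗ[ℚ] FreeAlgebra ℚ X)
    (hδx : ∀ a b : FreeAlgebra ℚ X, δx (a * b) = δx a * b + a * δx b)
    (hδxx : δx (FreeAlgebra.ι ℚ x) = FreeAlgebra.ι ℚ x)
    (hδxy : ∀ y : X, y ≠ x → δx (FreeAlgebra.ι ℚ y) = 0)
    (Tx : ℕ → Submodule ℚ (FreeAlgebra ℚ X))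
    (hTx : ∀ n : ℕ, Tx n = Submodule.span ℚ
      { w : FreeAlgebra ℚ X | ∃ (m : ℕ) (y : Fin m → X),
          w = (List.ofFn fun i => FreeAlgebra.ι ℚ (y i)).prod ∧
          (List.ofFn y).count x = n })
    (Dx : FreeAlgebra ℚ X →ₗ[ℚ] FreeAlgebra ℚ X)
    (hD1 : Dx 1 = 0)
    (hDword : ∀ (m : ℕ) (y : Fin (m + 1) → X),
      Dx (List.ofFn fun i => FreeAlgebra.ι ℚ (y i)).prod =
        (((List.ofFn y).tail).map fun z => FreeAlgebra.ι ℚ z).foldl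
          (fun a b => a * b - b * a) (δx (FreeAlgebra.ι ℚ (y 0))))
    (n : ℕ) :
    (∀ l ∈ Tx n ⊓ LieX.toSubmodule, Dx l = (n : ℚ) • l) ∧
    (∀ a ∈ Tx n, ((n : ℚ)⁻¹ • Dx a) ∈ Tx n ⊓ LieX.toSubmodule) := by
  subst hLieX
  simp only [hTx, span_prod_ofFn_eq_wordsWithCount]
  have hDι : ∀ y, Dx (ι ℚ y) = δx (ι ℚ y) := fun y => by
    simpa using map_word_cons_of_ofFn hDword y []
  have hDmul : ∀ a t y, Dx (word ℚ (a :: t) * ι ℚ y) = ⁅Dx (word ℚ (a :: t)), ι ℚ y⁆ :=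
    fun a t y => by
      rw [← word_singleton ℚ y, ← word_append, List.cons_append, map_word_cons_of_ofFn hDword,
        map_word_cons_of_ofFn hDword, List.map_append, List.foldl_append, Ring.lie_def]
      simp
  refine ⟨fun l hl => ?_, fun a ha => ?_⟩
  · rw [map_eq_of_mem_lieSpan hδx hDι hDmul hl.2,
      map_eq_smul_of_mem_wordsWithCount hδx hδxx hδxy hl.1]
  · exact Submodule.smul_mem _ _
      (map_mem_of_mem_wordsWithCount hδx hδxx hδxy hD1 hDι hDmul ha)

/-- For a distinguished letter `x ∈ X`, let `δ_x` be the derivation of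
`A = FreeAlgebra ℚ X` with `δ_x(x) = x` and `δ_x(y) = 0` for letters `y ≠ x`, let `Tₙˣ(X)`
be the span of the words in which the letter `x` appears exactly `n` times, `Lie(X)` the
Lie subalgebra generated by the letters, and `D_x` the linear map given on words by
`D_x(y₁⋯yₘ) = [⋯[[δ_x(y₁), y₂], y₃]⋯, yₘ]` (`D_x(1) = 0`).  Then `D_x(l) = n·l` for every
`l ∈ Tₙˣ(X) ∩ Lie(X)` (`n ≥ 1`); moreover `D_x` maps `Tₙˣ(X)` into `Tₙˣ(X) ∩ Lie(X)`, so
that `(1/n)·D_x` restricted to `Tₙˣ(X)` is a projection of `Tₙˣ(X)` onto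
`Tₙˣ(X) ∩ Lie(X)`. -/
theorem statement3 (X : Type) [DecidableEq X] (x : X)
    (LieX : LieSubalgebra ℚ (FreeAlgebra ℚ X))
    (hLieX : LieX = LieSubalgebra.lieSpan ℚ (FreeAlgebra ℚ X)
      (Set.range (FreeAlgebra.ι ℚ : X → FreeAlgebra ℚ X)))
    (δx : FreeAlgebra ℚ X →ₗ[ℚ] FreeAlgebra ℚ X)
    (hδx : ∀ a b : FreeAlgebra ℚ X, δx (a * b) = δx a * b + a * δx b)
    (hδxx : δx (FreeAlgebra.ι ℚ x) = FreeAlgebra.ι ℚ x)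
    (hδxy : ∀ y : X, y ≠ x → δx (FreeAlgebra.ι ℚ y) = 0)
    (Tx : ℕ → Submodule ℚ (FreeAlgebra ℚ X))
    (hTx : ∀ n : ℕ, Tx n = Submodule.span ℚ
      { w : FreeAlgebra ℚ X | ∃ (m : ℕ) (y : Fin m → X),
          w = (List.ofFn fun i => FreeAlgebra.ι ℚ (y i)).prod ∧
          (List.ofFn y).count x = n })
    (Dx : FreeAlgebra ℚ X →ₗ[ℚ] FreeAlgebra ℚ X)
    (hD1 : Dx 1 = 0)
    (hDword : ∀ (m : ℕ) (y : Fin (m + 1) → X),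
      Dx (List.ofFn fun i => FreeAlgebra.ι ℚ (y i)).prod =
        (((List.ofFn y).tail).map fun z => FreeAlgebra.ι ℚ z).foldl
          (fun a b => a * b - b * a) (δx (FreeAlgebra.ι ℚ (y 0))))
    (n : ℕ) (hn : 1 ≤ n) :
    (∀ l ∈ Tx n ⊓ LieX.toSubmodule, Dx l = (n : ℚ) • l) ∧
    (∀ a ∈ Tx n, ((n : ℚ)⁻¹ • Dx a) ∈ Tx n ⊓ LieX.toSubmodule) :=
  statement3_general X x LieX hLieX δx hδx hδxx hδxy Tx hTx Dx hD1 hDword n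
end

section
/- Let H be a Hopf algebra over ℚ with coproduct Δ, counit η : H → ℚ and unit ε : ℚ → H, and set ν := ε ∘ η : H → H. A linear map f : H → H takes all its values in the set Prim(H) = { x ∈ H : Δ(x) = x ⊗ 1 + 1 ⊗ x } of primitive elements if and only if f admits the pseudo-coproduct f ⊗ ν + ν ⊗ f, i.e. if and only if (f ⊗ ν + ν ⊗ f) ∘ Δ = Δ ∘ f, where (f ⊗ ν)(a ⊗ b) := f(a) ⊗ ν(b) and similarly for ν ⊗ f. -/
open TensorProduct

lemma aux5 (H : Type) [Ring H] [HopfAlgebra ℚ H] (f : H →ₗ[ℚ] H) (x : H) :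
    ((TensorProduct.map f (Algebra.linearMap ℚ H ∘ₗ Coalgebra.counit) +
        TensorProduct.map (Algebra.linearMap ℚ H ∘ₗ Coalgebra.counit) f :
        H ⊗[ℚ] H →ₗ[ℚ] H ⊗[ℚ] H))
      (Coalgebra.comul (R := ℚ) x) = f x ⊗ₜ[ℚ] (1 : H) + (1 : H) ⊗ₜ[ℚ] f x := by
  have h1 : TensorProduct.map f (Algebra.linearMap ℚ H ∘ₗ Coalgebra.counit)
      = (Algebra.linearMap ℚ H).lTensor H ∘ₗ f.rTensor ℚ ∘ₗ
        (Coalgebra.counit (R := ℚ) (A := H)).lTensor H := by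
    ext a b; simp
  have h2 : TensorProduct.map (Algebra.linearMap ℚ H ∘ₗ Coalgebra.counit) f
      = (Algebra.linearMap ℚ H).rTensor H ∘ₗ f.lTensor ℚ ∘ₗ
        (Coalgebra.counit (R := ℚ) (A := H)).rTensor H := by
    ext a b; simp
  rw [LinearMap.add_apply, h1, h2]
  simp only [LinearMap.comp_apply, Coalgebra.lTensor_counit_comul,
    Coalgebra.rTensor_counit_comul, LinearMap.rTensor_tmul, LinearMap.lTensor_tmul,
    Algebra.linearMap_apply, map_one]

/-- In a Hopf algebra `H` over `ℚ` with `ν := ε ∘ η` (unit composed with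
counit), a linear map `f : H → H` takes all its values in the primitive elements
(`Δ(x) = x ⊗ 1 + 1 ⊗ x`) if and only if `f ⊗ ν + ν ⊗ f` is a pseudo-coproduct for `f`,
i.e. `(f ⊗ ν + ν ⊗ f) ∘ Δ = Δ ∘ f`. -/
theorem statement5 (H : Type) [Ring H] [HopfAlgebra ℚ H] (f : H →ₗ[ℚ] H) :
    (∀ x : H, Coalgebra.comul (R := ℚ) (f x) = f x ⊗ₜ[ℚ] (1 : H) + (1 : H) ⊗ₜ[ℚ] f x) ↔
    (TensorProduct.map f (Algebra.linearMap ℚ H ∘ₗ Coalgebra.counit) +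
        TensorProduct.map (Algebra.linearMap ℚ H ∘ₗ Coalgebra.counit) f) ∘ₗ
        (Coalgebra.comul (R := ℚ) (A := H)) =
      Coalgebra.comul ∘ₗ f := by
  constructor
  · intro h
    ext x
    simp only [LinearMap.comp_apply, aux5 H f x]
    exact (h x).symm
  · intro h x
    have := LinearMap.congr_fun h x
    simp only [LinearMap.comp_apply, aux5 H f x] at this
    exact this.symm
end

section
/- Let A be an associative unital ℚ-algebra, θ ∈ ℚ, and let R : A → A be a linear map satisfying the weight-θ Rota–Baxter identity R(a)R(b) = R(R(a)b) + R(aR(b)) − θ·R(ab) for all a, b ∈ A. Let d : A → A be a derivation (d(ab) = d(a)b + a·d(b)) commuting with R (d ∘ R = R ∘ d). Fix x ∈ A and define recursively: R^[1](x) := R(x) and R^[n](x) := R(R^[n−1](x)·x) for n ≥ 2; I_d^[1](x) := d(x), R_d^[n](x) := R(I_d^[n](x)), and I_d^[n+1](x) := [R_d^[n](x), x] + θ·x·I_d^[n](x) for n ≥ 1, where [a,b] := ab − ba. Then for every n ≥ 1: d(R^[n](x)) = R_d^[n](x) + ∑_{i=1}^{n−1} R^[i](x)·R_d^[n−i](x).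 -/
/-- The iterated Rota–Baxter words `R^[0](x) := 1`, `R^[n](x) := R(R^[n−1](x)·x)`
(so `R^[1](x) = R(x)`). -/
noncomputable def RBword {A : Type} [Ring A] [Algebra ℚ A]
    (R : A →ₗ[ℚ] A) (x : A) : ℕ → A
  | 0 => 1
  | n + 1 => R (RBword R x n * x)

/-- The twisted words `I_d^[n](x)`, indexed so that `Itw R d θ x n = I_d^[n+1](x)`:
`I_d^[1](x) := d(x)` and `I_d^[n+1](x) := [R(I_d^[n](x)), x] + θ·x·I_d^[n](x)`
(recall `R_d^[n](x) := R(I_d^[n](x))`). -/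
noncomputable def Itw {A : Type} [Ring A] [Algebra ℚ A]
    (R d : A →ₗ[ℚ] A) (θ : ℚ) (x : A) : ℕ → A
  | 0 => d x
  | n + 1 => (R (Itw R d θ x n) * x - x * R (Itw R d θ x n)) + θ • (x * Itw R d θ x n)

section Aux
variable {A : Type} [Ring A] [Algebra ℚ A] (θ : ℚ) (R : A →ₗ[ℚ] A)
  (d : A →ₗ[ℚ] A) (x : A)

lemma key (hR : ∀ a b : A, R a * R b = R (R a * b) + R (a * R b) - θ • R (a * b))
    (i m : ℕ) :
    RBword R x (i+1) * R (Itw R d θ x m) =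
      (R (RBword R x (i+1) * Itw R d θ x m)
        - R (RBword R x i * Itw R d θ x (m+1)))
        + R (RBword R x i * R (Itw R d θ x m) * x) := by
  show R (RBword R x i * x) * R (Itw R d θ x m) = _
  rw [hR]
  show _ = (R (R (RBword R x i * x) * Itw R d θ x m) - _) + _
  rw [show Itw R d θ x (m+1) = (R (Itw R d θ x m) * x - x * R (Itw R d θ x m))
      + θ • (x * Itw R d θ x m) from rfl]
  simp only [mul_add, mul_sub, mul_smul_comm, map_add, map_sub, map_smul, mul_assoc]
  abel

lemma aux (hR : ∀ a b : A, R a * R b = R (R a * b) + R (a * R b) - θ • R (a * b))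
    (hd : ∀ a b : A, d (a * b) = d a * b + a * d b)
    (hcomm : ∀ a : A, d (R a) = R (d a)) (n : ℕ) :
    d (RBword R x (n+1)) = R (Itw R d θ x n) +
      ∑ j ∈ Finset.range n, RBword R x (j+1) * R (Itw R d θ x (n-1-j)) := by
  induction n with
  | zero =>
    show d (R (1 * x)) = _
    simp [hcomm, Itw]
  | succ n ih =>
    have step : d (RBword R x (n+2)) =
        R (d (RBword R x (n+1)) * x) + R (RBword R x (n+1) * d x) := by
      show d (R (RBword R x (n+1) * x)) = _
      rw [hcomm, hd, map_add]
    have hsum : ∑ j ∈ Finset.range (n+1), RBword R x (j+1) * R (Itw R d θ x (n-j)) =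
        (R (RBword R x (n+1) * Itw R d θ x 0) - R (RBword R x 0 * Itw R d θ x (n+1)))
          + ∑ j ∈ Finset.range (n+1),
              R (RBword R x j * R (Itw R d θ x (n-j)) * x) := by
      have hterm : ∀ j ∈ Finset.range (n+1),
          RBword R x (j+1) * R (Itw R d θ x (n-j)) =
            ((fun k => R (RBword R x k * Itw R d θ x (n+1-k))) (j+1)
              - (fun k => R (RBword R x k * Itw R d θ x (n+1-k))) j)
            + R (RBword R x j * R (Itw R d θ x (n-j)) * x) := by
        intro j hj
        simp only [Finset.mem_range] at hj
        have h1 : n + 1 - (j+1) = n - j := by omega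
        have h2 : n + 1 - j = n - j + 1 := by omega
        simp only [h1, h2]
        exact key θ R d x hR j (n-j)
      rw [Finset.sum_congr rfl hterm, Finset.sum_add_distrib,
        Finset.sum_range_sub (fun k => R (RBword R x k * Itw R d θ x (n+1-k)))]
      simp
    have hsplit : ∑ j ∈ Finset.range (n+1),
        R (RBword R x j * R (Itw R d θ x (n-j)) * x) =
        (∑ j ∈ Finset.range n, R (RBword R x (j+1) * R (Itw R d θ x (n-1-j)) * x))
          + R (RBword R x 0 * R (Itw R d θ x n) * x) := by
      rw [Finset.sum_range_succ' (fun j => R (RBword R x j * R (Itw R d θ x (n-j)) * x))]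
      congr 1
      refine Finset.sum_congr rfl fun j hj => ?_
      have : n - (j+1) = n - 1 - j := by omega
      rw [this]
    rw [step, ih, add_mul, Finset.sum_mul, map_add, map_sum]
    simp only [Nat.add_sub_cancel]
    rw [hsum, hsplit]
    simp only [RBword, Itw, one_mul, mul_assoc]
    abel

end Aux

/-- Let `R` be a weight-`θ` Rota–Baxter operator on an associative unital
`ℚ`-algebra `A` and `d` a derivation of `A` commuting with `R`.  Then for every `x ∈ A` and
every `n ≥ 1`, `d(R^[n](x)) = R_d^[n](x) + ∑_{i=1}^{n−1} R^[i](x)·R_d^[n−i](x)`, where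
`R_d^[n](x) = R(I_d^[n](x))`. -/
theorem statement9 (A : Type) [Ring A] [Algebra ℚ A] (θ : ℚ)
    (R : A →ₗ[ℚ] A)
    (hR : ∀ a b : A, R a * R b = R (R a * b) + R (a * R b) - θ • R (a * b))
    (d : A →ₗ[ℚ] A)
    (hd : ∀ a b : A, d (a * b) = d a * b + a * d b)
    (hcomm : ∀ a : A, d (R a) = R (d a))
    (x : A) (n : ℕ) (hn : 1 ≤ n) :
    d (RBword R x n) =
      R (Itw R d θ x (n - 1)) +
        ∑ i ∈ Finset.Icc 1 (n - 1), RBword R x i * R (Itw R d θ x (n - i - 1)) := by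
  obtain ⟨m, rfl⟩ : ∃ m, n = m + 1 := ⟨n - 1, by omega⟩
  have h := aux θ R d x hR hd hcomm m
  rw [h]
  simp only [Nat.add_sub_cancel]
  congr 1
  rw [← Finset.Ico_add_one_right_eq_Icc, Finset.sum_Ico_eq_sum_range]
  simp only [Nat.add_sub_cancel, Nat.succ_sub_one]
  refine Finset.sum_congr rfl fun j hj => ?_
  have h2 : m + 1 - (j + 1) - 1 = m - 1 - j := by omega
  rw [Nat.add_comm 1 j, h2]
end

section
/- Let A be an associative unital ring, l, x ∈ A, and let ad_l(a) := l·a − a·l. Then for every n ≥ 1: ∑_{k=0}^{n−1} l^{n−1−k}·x·l^{k} = ∑_{i=0}^{n−1} C(n, i+1)·l^{n−1−i}·(−ad_l)^i(x), where C(n, i+1) is the binomial coefficient and (−ad_l)^i the i-fold iterate of a ↦ −(la − al). -/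
private lemma key_s12 (A : Type) [Ring A] (l x : A) (k : ℕ) :
    x * l ^ k = ∑ j ∈ Finset.range (k + 1),
      k.choose j • (l ^ (k - j) * (fun a => -(l * a - a * l))^[j] x) := by
  set L := LinearMap.mulLeft ℕ l with hL
  set D := LinearMap.mulRight ℕ l - L with hD
  have hDfun : ⇑D = fun a => -(l * a - a * l) := by
    funext a
    simp only [hD, hL, LinearMap.sub_apply, LinearMap.mulRight_apply, LinearMap.mulLeft_apply]
    rw [neg_sub]
  have hc : Commute D L :=
    ((LinearMap.commute_mulLeft_right (R := ℕ) l l).symm.sub_left (Commute.refl L))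
  have hRL : LinearMap.mulRight ℕ l = D + L := by rw [hD]; abel
  have h1 : x * l ^ k = (LinearMap.mulRight ℕ l ^ k) x := by
    rw [LinearMap.pow_mulRight, LinearMap.mulRight_apply]
  rw [h1, hRL, hc.add_pow, LinearMap.sum_apply]
  refine Finset.sum_congr rfl fun j hj => ?_
  rw [(hc.pow_pow j (k - j)).eq]
  simp only [Module.End.mul_apply, Module.End.natCast_apply, map_nsmul,
    Module.End.pow_apply, hDfun, hL]
  rw [← Module.End.pow_apply, LinearMap.pow_mulLeft, LinearMap.mulLeft_apply]

/-- In an associative unital ring `A`, with `ad_l(a) := l·a − a·l`, for all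
`l, x ∈ A` and `n ≥ 1`:
`∑_{k=0}^{n−1} l^{n−1−k}·x·l^k = ∑_{i=0}^{n−1} C(n, i+1)·l^{n−1−i}·(−ad_l)^i(x)`. -/
theorem statement12 (A : Type) [Ring A] (l x : A) (n : ℕ) (hn : 1 ≤ n) :
    ∑ k ∈ Finset.range n, l ^ (n - 1 - k) * x * l ^ k =
      ∑ i ∈ Finset.range n,
        n.choose (i + 1) • (l ^ (n - 1 - i) * (fun a => -(l * a - a * l))^[i] x) := by
  have step : ∀ k ∈ Finset.range n,
      l ^ (n - 1 - k) * x * l ^ k = ∑ j ∈ Finset.range (k + 1),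
        k.choose j • (l ^ (n - 1 - j) * (fun a => -(l * a - a * l))^[j] x) := by
    intro k hk
    rw [mul_assoc, key_s12, Finset.mul_sum]
    refine Finset.sum_congr rfl fun j hj => ?_
    rw [mul_smul_comm, ← mul_assoc, ← pow_add]
    congr 3
    simp only [Finset.mem_range] at hk hj
    omega
  rw [Finset.sum_congr rfl step]
  have hswap := Finset.sum_Ico_Ico_comm 0 n
    (fun j k => k.choose j • (l ^ (n - 1 - j) * (fun a => -(l * a - a * l))^[j] x))
  simp only [Nat.Ico_zero_eq_range] at hswap
  rw [← hswap]
  refine Finset.sum_congr rfl fun j hj => ?_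
  rw [← Finset.sum_smul]
  congr 1
  have : Finset.Ico j n = Finset.Icc j (n - 1) := by
    rw [← Finset.Ico_add_one_right_eq_Icc]
    congr 1
    omega
  rw [this, Nat.sum_Icc_choose]
  congr 1
  omega
end

section
/- (Magnus-type formula) Let A be a Banach algebra over ℝ (or ℂ), let d : A → A be a continuous linear derivation (d(ab) = d(a)b + a·d(b)), and let l ∈ A. Let exp denote the exponential in A and ad_l(a) := l·a − a·l. Then exp(−l)·d(exp(l)) = ∑_{i=0}^{∞} (1/(i+1)!)·(−ad_l)^i(d(l)), the series on the right converging absolutely; equivalently, the logarithmic derivative of exp(l) with respect to d equals ((exp(−ad_l) − 1)/(−ad_l)) applied to d(l). -/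
/-!
`F t := exp (-t l) * d (exp (t l))` vanishes at `0` and, because `d` is a derivation and `l`
commutes with `exp (t l)`, solves the linear equation `F' = d l + T F` with `T = -ad_l`.
Duhamel's formula gives `F 1 = ∫₀¹ exp (t T) (d l) dt`, and integrating the exponential series
termwise (by dominated convergence) produces the coefficients `1 / (i + 1)!`.
-/

open NormedSpace ContinuousLinearMap
open scoped Nat

section BanachAlgebra

variable {𝔸 : Type*} [NormedRing 𝔸] [NormedAlgebra ℝ 𝔸] [CompleteSpace 𝔸]

theorem hasSum_integral_exp_smul (x : 𝔸) :
    HasSum (fun n : ℕ => ((n + 1)! : ℝ)⁻¹ • x ^ n) (∫ t in (0 : ℝ)..1, exp (t • x)) := by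
  have hterm (n : ℕ) :
      ∫ t in (0 : ℝ)..1, (n ! : ℝ)⁻¹ • (t • x) ^ n = ((n + 1)! : ℝ)⁻¹ • x ^ n := by
    simp_rw [smul_pow, smul_smul, intervalIntegral.integral_smul_const,
      intervalIntegral.integral_const_mul, integral_pow]
    rw [Nat.factorial_succ]
    push_cast
    field_simp
    simp
  simp_rw [← hterm]
  refine intervalIntegral.hasSum_integral_of_dominated_convergence
    (fun n _ => ‖(n ! : ℝ)⁻¹ • x ^ n‖) (fun n => (Continuous.aestronglyMeasurable (by fun_prop)))
    (fun n => .of_forall fun t ht => ?_) (.of_forall fun _ _ => norm_expSeries_summable' x)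
    intervalIntegrable_const (.of_forall fun t _ => exp_series_hasSum_exp' (t • x))
  rw [Set.uIoc_of_le zero_le_one] at ht
  rw [smul_pow, smul_comm, norm_smul, Real.norm_eq_abs, abs_pow, abs_of_pos ht.1]
  exact mul_le_of_le_one_left (norm_nonneg _) (pow_le_one₀ ht.1.le ht.2)

end BanachAlgebra

theorem norm_pow_apply_le {𝕜 E : Type*} [NontriviallyNormedField 𝕜] [NormedAddCommGroup E]
    [NormedSpace 𝕜 E] (T : E →L[𝕜] E) (y : E) : ∀ n : ℕ, ‖(T ^ n) y‖ ≤ ‖T‖ ^ n * ‖y‖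
  | 0 => by simp
  | n + 1 => by
    rw [pow_succ', mul_apply_eq_comp, pow_succ', mul_assoc]
    exact T.le_opNorm_of_le (norm_pow_apply_le T y n)

section BanachSpace

variable {E : Type*} [NormedAddCommGroup E] [NormedSpace ℝ E]

theorem summable_norm_inv_factorial_succ_smul_pow_apply (T : E →L[ℝ] E) (y : E) :
    Summable fun n : ℕ => ‖((n + 1)! : ℝ)⁻¹ • (T ^ n) y‖ := by
  refine .of_nonneg_of_le (fun _ => norm_nonneg _) (fun n => ?_)
    ((Real.summable_pow_div_factorial ‖T‖).mul_right ‖y‖)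
  rw [norm_smul, norm_inv, RCLike.norm_natCast, div_mul_eq_mul_div, inv_mul_eq_div]
  gcongr
  · exact norm_pow_apply_le T y n
  · omega

variable [CompleteSpace E]

theorem hasSum_integral_exp_smul_apply (T : E →L[ℝ] E) (y : E) :
    HasSum (fun n : ℕ => ((n + 1)! : ℝ)⁻¹ • (T ^ n) y) (∫ t in (0 : ℝ)..1, exp (t • T) y) := by
  have hsum := (hasSum_integral_exp_smul T).mapL (apply ℝ E y)
  rwa [← (apply ℝ E y).intervalIntegral_comp_comm
    ((differentiable_exp_smul_const ℝ T).continuous.intervalIntegrable _ _)] at hsum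

theorem eq_integral_exp_smul_apply_of_hasDerivAt {T : E →L[ℝ] E} {F : ℝ → E} {y : E}
    (hF : ∀ t, HasDerivAt F (y + T (F t)) t) (hF₀ : F 0 = 0) :
    F 1 = ∫ t in (0 : ℝ)..1, exp (t • T) y := by
  have hcont : Continuous fun t : ℝ => exp (t • T) y :=
    (differentiable_exp_smul_const ℝ T).continuous.clm_apply continuous_const
  have hK : ∀ s, HasDerivAt (fun s => exp ((1 - s) • T) (F s)) (exp ((1 - s) • T) y) s := by
    intro s
    have hexp : HasDerivAt (fun s : ℝ => exp ((1 - s) • T)) (-(exp ((1 - s) • T) * T)) s := by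
      simpa using (hasDerivAt_exp_smul_const T (1 - s)).comp_const_sub 1 s
    convert hexp.clm_apply (hF s) using 1
    simp [map_add]
  have hFTC := intervalIntegral.integral_eq_sub_of_hasDerivAt (a := 0) (b := 1)
    (fun s _ => hK s) ((hcont.comp (continuous_const.sub continuous_id)).intervalIntegrable 0 1)
  calc F 1 = ∫ s in (0 : ℝ)..1, exp ((1 - s) • T) y := by simpa [hF₀] using hFTC.symm
    _ = ∫ t in (0 : ℝ)..1, exp (t • T) y := by
      simp [intervalIntegral.integral_comp_sub_left (fun t => exp (t • T) y)]

end BanachSpace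

theorem map_one_eq_zero_of_leibniz {R : Type*} [Ring R] {d : R → R}
    (hd : ∀ a b, d (a * b) = d a * b + a * d b) : d 1 = 0 := by
  simpa using hd 1 1

section Ad

variable (𝕜 : Type*) {A : Type*} [NontriviallyNormedField 𝕜] [NormedRing A] [NormedAlgebra 𝕜 A]

noncomputable def adCLM (l : A) : A →L[𝕜] A :=
  mul 𝕜 A l - (mul 𝕜 A).flip l

@[simp]
theorem adCLM_apply (l a : A) : adCLM 𝕜 l a = l * a - a * l :=
  rfl

end Ad

section Derivation

variable {A : Type*} [NormedRing A] [NormedAlgebra ℝ A] [CompleteSpace A]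

theorem exp_smul_neg_mul_exp_smul (l : A) (t : ℝ) : exp (t • -l) * exp (t • l) = 1 := by
  -- `exp_add_of_commute` is stated over a normed `ℚ`-algebra.
  let _ : NormedAlgebra ℚ A := .restrictScalars ℚ ℝ A
  rw [← exp_add_of_commute ((Commute.refl l).neg_left.smul_left t |>.smul_right t), smul_neg,
    neg_add_cancel, exp_zero]

theorem hasDerivAt_exp_smul_neg_mul_map_exp_smul (d : A →L[ℝ] A)
    (hd : ∀ a b, d (a * b) = d a * b + a * d b) (l : A) (t : ℝ) :
    HasDerivAt (fun t : ℝ => exp (t • -l) * d (exp (t • l)))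
      (d l + (-adCLM ℝ l) (exp (t • -l) * d (exp (t • l)))) t := by
  have hexp := hasDerivAt_exp_smul_const' (𝕂 := ℝ) (-l) t
  have hdexp : HasDerivAt (fun t : ℝ => d (exp (t • l))) (d (exp (t • l) * l)) t :=
    d.hasFDerivAt.comp_hasDerivAt t (hasDerivAt_exp_smul_const l t)
  refine (hexp.mul hdexp).congr_deriv ?_
  rw [hd, mul_add, ← mul_assoc (exp (t • -l)) (exp (t • l)), exp_smul_neg_mul_exp_smul, one_mul,
    neg_apply, adCLM_apply]
  noncomm_ring

end Derivation

/-- Magnus-type formula: Let `A` be a real Banach algebra, `d : A → A` a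
continuous linear derivation and `l ∈ A`.  Then
`exp(−l)·d(exp(l)) = ∑_{i=0}^{∞} (1/(i+1)!)·(−ad_l)^i(d(l))`, the series on the right
converging absolutely; i.e. the logarithmic derivative of `exp(l)` with respect to `d`
equals `((exp(−ad_l) − 1)/(−ad_l))(d(l))`. -/
theorem statement13 (A : Type) [NormedRing A] [NormedAlgebra ℝ A] [CompleteSpace A]
    (d : A →L[ℝ] A) (hd : ∀ a b : A, d (a * b) = d a * b + a * d b) (l : A) :
    (Summable fun i : ℕ =>
      ‖(((i + 1).factorial : ℝ)⁻¹ • (fun a => -(l * a - a * l))^[i] (d l) : A)‖) ∧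
    NormedSpace.exp (-l) * d (NormedSpace.exp l) =
      ∑' i : ℕ, ((i + 1).factorial : ℝ)⁻¹ • (fun a => -(l * a - a * l))^[i] (d l) := by
  have hiter (i : ℕ) : (fun a => -(l * a - a * l))^[i] (d l) = ((-adCLM ℝ l) ^ i) (d l) := by
    rw [FunLike.coe_pow_eq_iterate]
    rfl
  simp only [hiter]
  refine ⟨summable_norm_inv_factorial_succ_smul_pow_apply _ _, ?_⟩
  rw [(hasSum_integral_exp_smul_apply _ _).tsum_eq]
  simpa using eq_integral_exp_smul_apply_of_hasDerivAt
    (hasDerivAt_exp_smul_neg_mul_map_exp_smul d hd l) (by simp [map_one_eq_zero_of_leibniz hd])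
end

section
/- Let L = ⊕_{n≥1} L_n be a graded Lie algebra over ℚ and let δ : L → L be a Lie derivation (δ([a,b]) = [δ(a),b] + [a,δ(b)]) that preserves the grading (δ(L_n) ⊆ L_n) and restricts to a bijection of each L_n. Let (B_k)_{k≥0} denote the Bernoulli numbers, so that z/(e^z − 1) = ∑_{k≥0} (B_k/k!) z^k. Then for every family h = (h_n)_{n≥1} with h_n ∈ L_n there exists a unique family l = (l_n)_{n≥1} with l_n ∈ L_n such that for every n ≥ 1: δ(l_n) = ∑_{k≥0} (B_k/k!)·(−1)^k· ∑_{n₁+⋯+n_k+m = n, n_j ≥ 1, m ≥ 1} ad_{l_{n₁}} ∘ ⋯ ∘ ad_{l_{n_k}} (h_m), where ad_a(b) := [a,b]; i.e. the Magnus-type fixed-point equation l = δ^{−1}( (−ad_l)/(exp(−ad_l) − 1)(h) ) has a unique solution in the completion ∏_{n≥1} L_n, obtained recursively degree by degree (the inner sum for fixed n is finite). -/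
section Aux

variable {L : Type} [LieRing L] [LieAlgebra ℚ L]

/-- The right-hand side of the Magnus-type equation in degree `n`. -/
noncomputable def st14RHS (h l : ℕ → L) (n : ℕ) : L :=
  ∑ k ∈ Finset.range (n + 1),
    ((bernoulli k / k.factorial) * (-1 : ℚ) ^ k) •
      ∑ c ∈ (Finset.Nat.antidiagonalTuple (k + 1) n).filter
          (fun c => ∀ i, 1 ≤ c i),
        (List.ofFn fun j : Fin k => l (c j.castSucc)).foldr
          (fun a b => ⁅a, b⁆) (h (c (Fin.last k)))

lemma st14_foldr_mem (Lgrade : ℕ → Submodule ℚ L)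
    (hLbracket : ∀ (m n : ℕ), ∀ a ∈ Lgrade m, ∀ b ∈ Lgrade n, ⁅a, b⁆ ∈ Lgrade (m + n)) :
    ∀ (k : ℕ) (c : Fin k → ℕ) (x : Fin k → L), (∀ i, x i ∈ Lgrade (c i)) →
      ∀ (m : ℕ) (b : L), b ∈ Lgrade m →
      (List.ofFn x).foldr (fun a b => ⁅a, b⁆) b ∈ Lgrade (∑ i, c i + m) := by
  intro k
  induction k with
  | zero => intro c x hx m b hb; simpa using hb
  | succ k ih =>
    intro c x hx m b hb
    rw [List.ofFn_succ, List.foldr_cons, Fin.sum_univ_succ, add_assoc]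
    exact hLbracket _ _ _ (hx 0) _ (ih _ _ (fun i => hx i.succ) m b hb)

lemma st14RHS_mem (Lgrade : ℕ → Submodule ℚ L)
    (hLbracket : ∀ (m n : ℕ), ∀ a ∈ Lgrade m, ∀ b ∈ Lgrade n, ⁅a, b⁆ ∈ Lgrade (m + n))
    (h l : ℕ → L) (hh : ∀ n, h n ∈ Lgrade n) (hl : ∀ n, l n ∈ Lgrade n) (n : ℕ) :
    st14RHS h l n ∈ Lgrade n := by
  refine Submodule.sum_mem _ (fun k _ => Submodule.smul_mem _ _
    (Submodule.sum_mem _ (fun c hc => ?_)))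
  rw [Finset.mem_filter, Finset.Nat.mem_antidiagonalTuple] at hc
  have := st14_foldr_mem Lgrade hLbracket k (fun j => c j.castSucc)
    (fun j => l (c j.castSucc)) (fun j => hl _) (c (Fin.last k)) (h (c (Fin.last k)))
    (hh _)
  rwa [← Fin.sum_univ_castSucc, hc.1] at this

lemma st14RHS_congr (h l l' : ℕ → L) (n : ℕ) (hll' : ∀ m, m < n → l m = l' m) :
    st14RHS h l n = st14RHS h l' n := by
  refine Finset.sum_congr rfl (fun k _ => ?_)
  congr 1
  refine Finset.sum_congr rfl (fun c hc => ?_)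
  rw [Finset.mem_filter, Finset.Nat.mem_antidiagonalTuple] at hc
  have hfn : (fun j : Fin k => l (c j.castSucc)) = fun j : Fin k => l' (c j.castSucc) := by
    funext j
    refine hll' _ ?_
    have hne : (j.castSucc : Fin (k + 1)) ≠ Fin.last k := by
      simp [Fin.ext_iff, (j.isLt).ne]
    have hle : c j.castSucc + c (Fin.last k) ≤ ∑ i, c i := by
      rw [← Finset.sum_pair hne]
      exact Finset.sum_le_sum_of_subset (Finset.subset_univ _)
    have h1 : 1 ≤ c (Fin.last k) := hc.2 _
    omega
  rw [hfn]

/-- Prefix construction: `st14P ch n` gives the first `n` values of the solution. -/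
noncomputable def st14P (ch : ℕ → (ℕ → L) → L) : ℕ → ℕ → L
  | 0 => fun _ => 0
  | (n + 1) => fun m => if m = n then ch n (st14P ch n) else st14P ch n m

lemma st14P_succ (ch : ℕ → (ℕ → L) → L) (n m : ℕ) :
    st14P ch (n + 1) m = if m = n then ch n (st14P ch n) else st14P ch n m := rfl

end Aux

/-- Let `L = ⊕_{n≥1} L_n` be a graded Lie algebra over `ℚ` (encoded by
submodules `Lgrade n` with `Lgrade 0 = ⊥`, `⁅L_m, L_n⁆ ⊆ L_{m+n}` and `L` the internal
direct sum of the `Lgrade n`), and let `δ` be a Lie derivation preserving the grading and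
restricting to a bijection of each `L_n` (`n ≥ 1`).  Then for every family `h = (h_n)_{n≥1}`
with `h_n ∈ L_n` there is a unique family `l = (l_n)_{n≥1}` with `l_n ∈ L_n` such that for
every `n ≥ 1`:
`δ(l_n) = ∑_{k≥0} (B_k/k!)·(−1)^k · ∑_{n₁+⋯+n_k+m=n, n_j≥1, m≥1}
  ad_{l_{n₁}} ∘ ⋯ ∘ ad_{l_{n_k}} (h_m)`,
where `B_k` are the Bernoulli numbers (`z/(e^z−1) = ∑ B_k z^k/k!`) and `ad_a b := ⁅a, b⁆`;
the outer sum may be cut at `k = n` since the inner sum is empty for `k ≥ n`.  This is the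
Magnus-type fixed-point equation `l = δ⁻¹((−ad_l)/(exp(−ad_l) − 1)(h))`, solved uniquely,
degree by degree, in the completion `∏_{n≥1} L_n`. -/
theorem statement14 (L : Type) [LieRing L] [LieAlgebra ℚ L]
    (Lgrade : ℕ → Submodule ℚ L)
    (hL0 : Lgrade 0 = ⊥)
    (hLbracket : ∀ (m n : ℕ), ∀ a ∈ Lgrade m, ∀ b ∈ Lgrade n, ⁅a, b⁆ ∈ Lgrade (m + n))
    (hLinternal : DirectSum.IsInternal Lgrade)
    (δ : L →ₗ[ℚ] L)
    (hδLie : ∀ a b : L, δ ⁅a, b⁆ = ⁅δ a, b⁆ + ⁅a, δ b⁆)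
    (hδgrade : ∀ n : ℕ, ∀ a ∈ Lgrade n, δ a ∈ Lgrade n)
    (hδbij : ∀ n : ℕ, 1 ≤ n → ∀ y ∈ Lgrade n, ∃! x : L, x ∈ Lgrade n ∧ δ x = y)
    (h : ℕ → L) (hh : ∀ n : ℕ, h n ∈ Lgrade n) :
    ∃! l : ℕ → L, (∀ n : ℕ, l n ∈ Lgrade n) ∧
      ∀ n : ℕ, 1 ≤ n →
        δ (l n) =
          ∑ k ∈ Finset.range (n + 1),
            ((bernoulli k / k.factorial) * (-1 : ℚ) ^ k) •
              ∑ c ∈ (Finset.Nat.antidiagonalTuple (k + 1) n).filter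
                  (fun c => ∀ i, 1 ≤ c i),
                (List.ofFn fun j : Fin k => l (c j.castSucc)).foldr
                  (fun a b => ⁅a, b⁆) (h (c (Fin.last k))) := by
  classical
  -- a total choice function
  have hex : ∀ (n : ℕ) (prev : ℕ → L), ∃ x : L, x ∈ Lgrade n ∧
      ((1 ≤ n ∧ ∀ m, prev m ∈ Lgrade m) → δ x = st14RHS h prev n) := by
    intro n prev
    by_cases hc : 1 ≤ n ∧ ∀ m, prev m ∈ Lgrade m
    · obtain ⟨x, hx⟩ := (hδbij n hc.1 (st14RHS h prev n)
        (st14RHS_mem Lgrade hLbracket h prev hh hc.2 n)).exists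
      exact ⟨x, hx.1, fun _ => hx.2⟩
    · exact ⟨0, Submodule.zero_mem _, fun hc' => absurd hc' hc⟩
  choose ch hchmem hchspec using hex
  set l : ℕ → L := fun n => st14P ch (n + 1) n with hldef
  have hPmem : ∀ n m, st14P ch n m ∈ Lgrade m := by
    intro n
    induction n with
    | zero => intro m; exact Submodule.zero_mem _
    | succ n ih =>
      intro m
      by_cases hm : m = n
      · subst hm; rw [st14P_succ, if_pos rfl]; exact hchmem _ _
      · rw [st14P_succ, if_neg hm]; exact ih m
  have hPlt : ∀ n m, m < n → st14P ch n m = l m := by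
    intro n
    induction n with
    | zero => intro m hm; omega
    | succ n ih =>
      intro m hm
      rw [st14P_succ]
      rcases Nat.lt_succ_iff_lt_or_eq.mp hm with hm | rfl
      · rw [if_neg hm.ne, ih m hm]
      · rw [if_pos rfl]
        show ch m (st14P ch m) = st14P ch (m + 1) m
        rw [st14P_succ, if_pos rfl]
  have hlP : ∀ n, l n = ch n (st14P ch n) := by
    intro n
    rw [hldef]
    show st14P ch (n + 1) n = _
    rw [st14P_succ, if_pos rfl]
  have hlmem : ∀ n, l n ∈ Lgrade n := fun n => hPmem (n + 1) n
  have hleq : ∀ n, 1 ≤ n → δ (l n) = st14RHS h l n := by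
    intro n hn
    rw [hlP n, hchspec n (st14P ch n) ⟨hn, hPmem n⟩]
    exact st14RHS_congr h _ l n (fun m hm => hPlt n m hm)
  refine ⟨l, ⟨hlmem, fun n hn => hleq n hn⟩, ?_⟩
  rintro l' ⟨hl'mem, hl'eq⟩
  funext n
  induction n using Nat.strong_induction_on with
  | _ n ih =>
    rcases Nat.eq_zero_or_pos n with rfl | hn
    · have h1 : l' 0 = 0 := by
        have := hl'mem 0; rw [hL0] at this; simpa using this
      have h2 : l 0 = 0 := by
        have := hlmem 0; rw [hL0] at this; simpa using this
      rw [h1, h2]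
    · have key := hδbij n hn (st14RHS h l n)
        (st14RHS_mem Lgrade hLbracket h l hh hlmem n)
      have e1 : δ (l' n) = st14RHS h l' n := hl'eq n hn
      have e2 : st14RHS h l' n = st14RHS h l n :=
        st14RHS_congr h l' l n (fun m hm => ih m hm)
      exact key.unique ⟨hl'mem n, e1.trans e2⟩ ⟨hlmem n, hleq n hn⟩
end
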